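/- arXiv:2510.20327 — 3 statements merged into one kernel-verified Lean document; each statement's English description precedes it below -/
import Mathlib

section
/- Let X, Y be random variables on finite sets with joint law p(x,y), and let q(y|x) be any conditional probability kernel with q(y|x) > 0 wherever needed. Define q(x,y) = p(x) q(y|x). If KL(p(x,y) ‖ q(x,y)) ≤ KL(p(x)p(y) ‖ q(x,y)), then the variational quantity I_vCLUB := E_{p(x,y)}[log q(y|x)] − E_{p(x)}E_{p(y)}[log q(y|x)] is an upper bound on the mutual information I(X;Y). -/
/-! Both divergences are taken against the same reference `q(x,y) = p(x) q(y|x)`. Expanding the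
logarithms, `KL(p ‖ q) = I(X;Y) + E_p[log p(y)] - E_p[log q(y|x)]` and
`KL(p(x)p(y) ‖ q) = E_{p(y)}[log p(y)] - E_{p(x)p(y)}[log q(y|x)]`. The two `log p(y)` terms agree,
as both only see the marginal `p(y)`, so `KL(p ‖ q) - KL(p(x)p(y) ‖ q) = I(X;Y) - I_vCLUB`. -/

open Finset Real

section

variable {X Y : Type*} {p : X → Y → ℝ}

lemma marginal_fst_pos [Fintype Y] (hp : ∀ x y, 0 < p x y) (x : X) (y : Y) : 0 < ∑ y', p x y' :=
  sum_pos (fun y' _ => hp x y') ⟨y, mem_univ y⟩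

lemma marginal_snd_pos [Fintype X] (hp : ∀ x y, 0 < p x y) (x : X) (y : Y) : 0 < ∑ x', p x' y :=
  sum_pos (fun x' _ => hp x' y) ⟨x, mem_univ x⟩

variable [Fintype X] [Fintype Y]

lemma sum_sum_mul_eq_sum_sum_marginals_mul (hpsum : ∑ x, ∑ y, p x y = 1) (g : Y → ℝ) :
    ∑ x, ∑ y, p x y * g y = ∑ x, ∑ y, (∑ y', p x y') * (∑ x', p x' y) * g y := by
  calc ∑ x, ∑ y, p x y * g y = ∑ y, (∑ x', p x' y) * g y := by
        rw [sum_comm]; simp only [sum_mul]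
    _ = ∑ y, ∑ x, (∑ y', p x y') * (∑ x', p x' y) * g y := by
        refine sum_congr rfl fun y _ => ?_
        rw [← sum_mul, ← sum_mul, hpsum, one_mul]
    _ = _ := sum_comm

variable {q : X → Y → ℝ}

lemma klDiv_joint_eq (hp : ∀ x y, 0 < p x y) (hq : ∀ x y, 0 < q x y) :
    ∑ x, ∑ y, p x y * log (p x y / ((∑ y', p x y') * q x y)) =
      ∑ x, ∑ y, p x y * log (p x y / ((∑ y', p x y') * (∑ x', p x' y))) +
        ∑ x, ∑ y, p x y * log (∑ x', p x' y) - ∑ x, ∑ y, p x y * log (q x y) := by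
  simp only [← sum_add_distrib, ← sum_sub_distrib]
  refine sum_congr rfl fun x _ => sum_congr rfl fun y _ => ?_
  have hpx := (marginal_fst_pos hp x y).ne'
  have hpy := (marginal_snd_pos hp x y).ne'
  rw [log_div (hp x y).ne' (mul_ne_zero hpx (hq x y).ne'),
    log_div (hp x y).ne' (mul_ne_zero hpx hpy), log_mul hpx (hq x y).ne', log_mul hpx hpy]
  ring

lemma klDiv_product_eq (hp : ∀ x y, 0 < p x y) (hq : ∀ x y, 0 < q x y) :
    ∑ x, ∑ y, (∑ y', p x y') * (∑ x', p x' y) *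
        log ((∑ y', p x y') * (∑ x', p x' y) / ((∑ y', p x y') * q x y)) =
      ∑ x, ∑ y, (∑ y', p x y') * (∑ x', p x' y) * log (∑ x', p x' y) -
        ∑ x, ∑ y, (∑ y', p x y') * (∑ x', p x' y) * log (q x y) := by
  simp only [← sum_sub_distrib]
  refine sum_congr rfl fun x _ => sum_congr rfl fun y _ => ?_
  rw [mul_div_mul_left _ _ (marginal_fst_pos hp x y).ne',
    log_div (marginal_snd_pos hp x y).ne' (hq x y).ne']
  ring

end

theorem stmt_7_general {X Y : Type*} [Fintype X] [Fintype Y]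
    (p : X → Y → ℝ) (q : X → Y → ℝ)
    (hp : ∀ x y, 0 < p x y) (hpsum : ∑ x, ∑ y, p x y = 1)
    (hq : ∀ x y, 0 < q x y)
    (hKL :
      (∑ x, ∑ y, p x y * Real.log (p x y / ((∑ y', p x y') * q x y))) ≤
      (∑ x, ∑ y, (∑ y', p x y') * (∑ x', p x' y) *
        Real.log ((∑ y', p x y') * (∑ x', p x' y) / ((∑ y', p x y') * q x y)))) :
    (∑ x, ∑ y, p x y * Real.log (p x y / ((∑ y', p x y') * (∑ x', p x' y)))) ≤
    (∑ x, ∑ y, p x y * Real.log (q x y)) -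
      (∑ x, ∑ y, (∑ y', p x y') * (∑ x', p x' y) * Real.log (q x y)) := by
  rw [klDiv_joint_eq hp hq, klDiv_product_eq hp hq,
    sum_sum_mul_eq_sum_sum_marginals_mul hpsum fun y => log (∑ x', p x' y)] at hKL
  linarith

theorem stmt_7 {X Y : Type*} [Fintype X] [Fintype Y]
    (p : X → Y → ℝ) (q : X → Y → ℝ)
    (hp : ∀ x y, 0 < p x y) (hpsum : ∑ x, ∑ y, p x y = 1)
    (hq : ∀ x y, 0 < q x y) (hqsum : ∀ x, ∑ y, q x y = 1)
    (hKL :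
      (∑ x, ∑ y, p x y * Real.log (p x y / ((∑ y', p x y') * q x y))) ≤
      (∑ x, ∑ y, (∑ y', p x y') * (∑ x', p x' y) *
        Real.log ((∑ y', p x y') * (∑ x', p x' y) / ((∑ y', p x y') * q x y)))) :
    (∑ x, ∑ y, p x y * Real.log (p x y / ((∑ y', p x y') * (∑ x', p x' y)))) ≤
    (∑ x, ∑ y, p x y * Real.log (q x y)) -
      (∑ x, ∑ y, (∑ y', p x y') * (∑ x', p x' y) * Real.log (q x y)) :=
  stmt_7_general p q hp hpsum hq hKL
end

section
/- Let X, Y be random variables on finite sets, and let p(y|x) denote the true conditional distribution. Then the CLUB quantity I_CLUB := E_{p(x,y)}[log p(y|x)] − E_{p(x)}E_{p(y)}[log p(y|x)] satisfies I_CLUB ≥ I(X;Y), i.e., the contrastive log-ratio bound with the exact conditional is an upper bound on mutual information. -/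
/-!
Write `p(x) = ∑ y, p x y` and `p(y) = ∑ x, p x y` for the marginals. Splitting the logarithm,
`I(X;Y) = E_{p(x,y)}[log p(y|x)] - ∑ y, p(y) log p(y)`, so the claim reduces to the cross-entropy
bound `∑ y, p(y) log p(y|x) ≤ ∑ y, p(y) log p(y)` for every `x`, averaged over `p(x)`.
That bound is Gibbs' inequality, which follows termwise from `log t ≤ t - 1`.
-/

open Real Finset

lemma mul_log_le_mul_log_add_sub {a b : ℝ} (ha : 0 ≤ a) (hb : 0 < b) :
    a * log b ≤ a * log a + (b - a) := by
  rcases ha.eq_or_lt with rfl | ha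
  · simpa using hb.le
  have h := mul_le_mul_of_nonneg_left (log_le_sub_one_of_pos (div_pos hb ha)) ha.le
  rw [log_div hb.ne' ha.ne', mul_sub, mul_sub, mul_div_cancel₀ b ha.ne', mul_one] at h
  linarith

theorem sum_mul_log_le_sum_mul_log {ι : Type*} (s : Finset ι) {a b : ι → ℝ}
    (ha : ∀ i ∈ s, 0 ≤ a i) (hb : ∀ i ∈ s, 0 < b i) (hab : ∑ i ∈ s, b i ≤ ∑ i ∈ s, a i) :
    ∑ i ∈ s, a i * log (b i) ≤ ∑ i ∈ s, a i * log (a i) :=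
  calc ∑ i ∈ s, a i * log (b i)
      ≤ ∑ i ∈ s, (a i * log (a i) + (b i - a i)) :=
        sum_le_sum fun i hi => mul_log_le_mul_log_add_sub (ha i hi) (hb i hi)
    _ = ∑ i ∈ s, a i * log (a i) + (∑ i ∈ s, b i - ∑ i ∈ s, a i) := by
        rw [sum_add_distrib, sum_sub_distrib]
    _ ≤ ∑ i ∈ s, a i * log (a i) := by linarith

section Marginals

variable {X Y : Type*} [Fintype X] [Fintype Y] {p : X → Y → ℝ}

lemma sum_sum_mul_log_div_marginals [Nonempty X] [Nonempty Y] (hp : ∀ x y, 0 < p x y) :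
    ∑ x, ∑ y, p x y * log (p x y / ((∑ y', p x y') * (∑ x', p x' y))) =
      ∑ x, ∑ y, p x y * log (p x y / ∑ y', p x y') -
        ∑ y, (∑ x', p x' y) * log (∑ x', p x' y) := by
  have hpX : ∀ x, 0 < ∑ y', p x y' := fun x => sum_pos (fun y _ => hp x y) univ_nonempty
  have hpY : ∀ y, 0 < ∑ x', p x' y := fun y => sum_pos (fun x _ => hp x y) univ_nonempty
  have hsplit : ∀ x y, p x y * log (p x y / ((∑ y', p x y') * (∑ x', p x' y))) =
      p x y * log (p x y / ∑ y', p x y') - p x y * log (∑ x', p x' y) := fun x y => by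
    rw [← div_div, log_div (div_pos (hp x y) (hpX x)).ne' (hpY y).ne', mul_sub]
  rw [sum_congr rfl fun x _ => sum_congr rfl fun y _ => hsplit x y]
  simp only [sum_sub_distrib, sum_mul]
  rw [sum_comm (f := fun x y => p x y * log (∑ x', p x' y))]

lemma sum_sum_marginals_mul_log_cond_le [Nonempty Y] (hp : ∀ x y, 0 < p x y)
    (hpsum : ∑ x, ∑ y, p x y = 1) :
    ∑ x, ∑ y, (∑ y', p x y') * (∑ x', p x' y) * log (p x y / ∑ y', p x y') ≤
      ∑ y, (∑ x', p x' y) * log (∑ x', p x' y) := by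
  have hpX : ∀ x, 0 < ∑ y', p x y' := fun x => sum_pos (fun y _ => hp x y) univ_nonempty
  have hcond : ∀ x, ∑ y, p x y / ∑ y', p x y' = 1 := fun x => by
    rw [← sum_div, div_self (hpX x).ne']
  have hpY : ∑ y, ∑ x', p x' y = 1 := by rw [sum_comm, hpsum]
  calc ∑ x, ∑ y, (∑ y', p x y') * (∑ x', p x' y) * log (p x y / ∑ y', p x y')
      = ∑ x, (∑ y', p x y') * ∑ y, (∑ x', p x' y) * log (p x y / ∑ y', p x y') := by
        refine sum_congr rfl fun x _ => ?_
        rw [mul_sum]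
        simp only [mul_assoc]
    _ ≤ ∑ x, (∑ y', p x y') * ∑ y, (∑ x', p x' y) * log (∑ x', p x' y) := by
        refine sum_le_sum fun x _ => mul_le_mul_of_nonneg_left ?_ (hpX x).le
        refine sum_mul_log_le_sum_mul_log _ (fun y _ => sum_nonneg fun x' _ => (hp x' y).le)
          (fun y _ => div_pos (hp x y) (hpX x)) ?_
        rw [hcond, hpY]
    _ = ∑ y, (∑ x', p x' y) * log (∑ x', p x' y) := by rw [← sum_mul, hpsum, one_mul]

end Marginals

theorem stmt_9 {X Y : Type*} [Fintype X] [Fintype Y]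
    (p : X → Y → ℝ)
    (hp : ∀ x y, 0 < p x y) (hpsum : ∑ x, ∑ y, p x y = 1) :
    (∑ x, ∑ y, p x y * Real.log (p x y / ((∑ y', p x y') * (∑ x', p x' y)))) ≤
    (∑ x, ∑ y, p x y * Real.log (p x y / (∑ y', p x y'))) -
      (∑ x, ∑ y, (∑ y', p x y') * (∑ x', p x' y) *
        Real.log (p x y / (∑ y', p x y'))) := by
  have : Nonempty X := by
    by_contra h
    simp [not_nonempty_iff.mp h] at hpsum
  have : Nonempty Y := by
    by_contra h
    simp [not_nonempty_iff.mp h] at hpsum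
  rw [sum_sum_mul_log_div_marginals hp]
  linarith [sum_sum_marginals_mul_log_cond_le hp hpsum]
end

section
/- Let X, Y be random variables on finite sets with strictly positive joint distribution, and q(y|x) a strictly positive conditional kernel with q(x,y) := p(x)q(y|x). Then I_vCLUB(X;Y) − I(X;Y) = KL(p(x)p(y) ‖ q(x,y)) − KL(p(x,y) ‖ q(x,y)). In particular, I_vCLUB ≥ I(X;Y) if and only if KL(p(x,y) ‖ q(x,y)) ≤ KL(p(x)p(y) ‖ q(x,y)). -/
/-!
Splitting every logarithm into logarithms of the factors, the difference of the two sides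
becomes `∑ (p(x,y) - p(x)p(y)) log p(y)`, which vanishes because `p(x,y)` and `p(x)p(y)` have the
same marginal on `Y`.
-/

open Finset Real

theorem mul_log_sub_mul_log_div_eq {r u v s : ℝ} (hr : 0 < r) (hu : 0 < u) (hv : 0 < v)
    (hs : 0 < s) :
    r * log s - u * v * log s - r * log (r / (u * v)) -
        (u * v * log (u * v / (u * s)) - r * log (r / (u * s))) =
      (r - u * v) * log v := by
  rw [mul_div_mul_left _ _ hu.ne', log_div hr.ne' (mul_pos hu hv).ne', log_div hv.ne' hs.ne',
    log_div hr.ne' (mul_pos hu hs).ne', log_mul hu.ne' hv.ne', log_mul hu.ne' hs.ne']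
  ring

section Marginals

variable {X Y : Type*} [Fintype X] [Fintype Y]

theorem sum_sum_mul_eq_sum_marginal_mul (p : X → Y → ℝ) (f : Y → ℝ) :
    ∑ x, ∑ y, p x y * f y = ∑ y, (∑ x, p x y) * f y := by
  rw [sum_comm]
  simp only [sum_mul]

theorem sum_sum_marginal_mul_marginal_mul_eq {p : X → Y → ℝ}
    (hpsum : ∑ x, ∑ y, p x y = 1) (f : Y → ℝ) :
    ∑ x, ∑ y, (∑ y', p x y') * (∑ x', p x' y) * f y = ∑ x, ∑ y, p x y * f y := by
  simp only [mul_assoc]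
  rw [← sum_mul_sum, hpsum, one_mul, sum_sum_mul_eq_sum_marginal_mul]

end Marginals

theorem stmt_15_general {X Y : Type*} [Fintype X] [Fintype Y]
    (p : X → Y → ℝ) (q : X → Y → ℝ)
    (hp : ∀ x y, 0 < p x y) (hpsum : ∑ x, ∑ y, p x y = 1)
    (hq : ∀ x y, 0 < q x y) :
    ((∑ x, ∑ y, p x y * Real.log (q x y)) -
      (∑ x, ∑ y, (∑ y', p x y') * (∑ x', p x' y) * Real.log (q x y))) -
    (∑ x, ∑ y, p x y * Real.log (p x y / ((∑ y', p x y') * (∑ x', p x' y)))) =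
    (∑ x, ∑ y, (∑ y', p x y') * (∑ x', p x' y) *
        Real.log ((∑ y', p x y') * (∑ x', p x' y) / ((∑ y', p x y') * q x y))) -
      (∑ x, ∑ y, p x y * Real.log (p x y / ((∑ y', p x y') * q x y))) := by
  have hpX : ∀ x y, 0 < ∑ y', p x y' := fun x y => sum_pos (fun y' _ => hp x y') ⟨y, mem_univ y⟩
  have hpY : ∀ x y, 0 < ∑ x', p x' y := fun x y => sum_pos (fun x' _ => hp x' y) ⟨x, mem_univ x⟩
  rw [← sub_eq_zero]
  calc _ = ∑ x, ∑ y, (p x y - (∑ y', p x y') * (∑ x', p x' y)) * log (∑ x', p x' y) := by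
        simp only [← sum_sub_distrib]
        exact sum_congr rfl fun x _ => sum_congr rfl fun y _ =>
          mul_log_sub_mul_log_div_eq (hp x y) (hpX x y) (hpY x y) (hq x y)
    _ = 0 := by
        simp only [sub_mul, sum_sub_distrib,
          sum_sum_marginal_mul_marginal_mul_eq hpsum fun y => log (∑ x', p x' y), sub_self]

theorem stmt_15 {X Y : Type*} [Fintype X] [Fintype Y]
    (p : X → Y → ℝ) (q : X → Y → ℝ)
    (hp : ∀ x y, 0 < p x y) (hpsum : ∑ x, ∑ y, p x y = 1)
    (hq : ∀ x y, 0 < q x y) (hqsum : ∀ x, ∑ y, q x y = 1) :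
    ((∑ x, ∑ y, p x y * Real.log (q x y)) -
      (∑ x, ∑ y, (∑ y', p x y') * (∑ x', p x' y) * Real.log (q x y))) -
    (∑ x, ∑ y, p x y * Real.log (p x y / ((∑ y', p x y') * (∑ x', p x' y)))) =
    (∑ x, ∑ y, (∑ y', p x y') * (∑ x', p x' y) *
        Real.log ((∑ y', p x y') * (∑ x', p x' y) / ((∑ y', p x y') * q x y))) -
      (∑ x, ∑ y, p x y * Real.log (p x y / ((∑ y', p x y') * q x y))) :=
  stmt_15_general p q hp hpsum hq
end
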